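/- arXiv:1609.01712 — 3 statements merged into one kernel-verified Lean document; each statement's English description precedes it below -/
import Mathlib

section
/- Let α ≥ 0 and let A, B be doubly infinite complex matrices with finite Sobolev α-norms. Then the commutator [A,B] = AB − BA satisfies ‖[A,B]‖_α ≤ 2 ‖A‖_α ‖B‖_α. -/
open MeasureTheory ENNReal NNReal

/-- The Sobolev α-weight on ℤ². -/
noncomputable def sobolevWeight (α : ℝ) (k l : ℤ) : ℝ := (1 + (k:ℝ)^2 + (l:ℝ)^2) ^ α

lemma sobolevWeight_nonneg (α : ℝ) (k l : ℤ) : 0 ≤ sobolevWeight α k l :=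
  Real.rpow_nonneg (by positivity) _

lemma sqrt_weight_submul (α : ℝ) (hα : 0 ≤ α) (j p k : ℤ) :
    Real.sqrt (sobolevWeight α j k) ≤
      Real.sqrt (sobolevWeight α j p) * Real.sqrt (sobolevWeight α p k) := by
  rw [← Real.sqrt_mul (sobolevWeight_nonneg α j p)]
  apply Real.sqrt_le_sqrt
  unfold sobolevWeight
  rw [← Real.mul_rpow (by positivity) (by positivity)]
  apply Real.rpow_le_rpow (by positivity) ?_ hα
  nlinarith [sq_nonneg ((j:ℝ)), sq_nonneg ((p:ℝ)), sq_nonneg ((k:ℝ)), sq_nonneg ((p:ℝ)^2),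
    sq_nonneg ((j:ℝ)*(k:ℝ))]

/-- the sqrt-weight in `ℝ≥0∞`. -/
noncomputable def sW (α : ℝ) (j k : ℤ) : ℝ≥0∞ :=
  ENNReal.ofReal (Real.sqrt (sobolevWeight α j k))

lemma sW_submul (α : ℝ) (hα : 0 ≤ α) (j p k : ℤ) : sW α j k ≤ sW α j p * sW α p k := by
  rw [sW, sW, sW, ← ENNReal.ofReal_mul (Real.sqrt_nonneg _)]
  exact ENNReal.ofReal_le_ofReal (sqrt_weight_submul α hα j p k)

lemma ofReal_weight_sq (α : ℝ) (j k : ℤ) (z : ℂ) :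
    ENNReal.ofReal (sobolevWeight α j k * ‖z‖ ^ 2) = (sW α j k * (‖z‖₊ : ℝ≥0∞)) ^ 2 := by
  rw [mul_pow, sW, ← ENNReal.ofReal_pow (Real.sqrt_nonneg _),
    Real.sq_sqrt (sobolevWeight_nonneg α j k), ← enorm_eq_nnnorm, ← ofReal_norm,
    ← ENNReal.ofReal_pow (norm_nonneg _), ← ENNReal.ofReal_mul (sobolevWeight_nonneg α j k)]

lemma cs_tsum (f g : ℤ → ℝ≥0∞) :
    (∑' p, f p * g p) ^ 2 ≤ (∑' p, f p ^ 2) * (∑' p, g p ^ 2) := by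
  have h := ENNReal.lintegral_mul_le_Lp_mul_Lq (Measure.count : Measure ℤ)
    (p := 2) (q := 2) (by constructor <;> norm_num)
    (f := f) (g := g) (Measurable.aemeasurable (by measurability))
    (Measurable.aemeasurable (by measurability))
  simp only [lintegral_count, Pi.mul_apply] at h
  calc (∑' p, f p * g p) ^ 2
      ≤ ((∑' p, f p ^ (2:ℝ)) ^ (1/(2:ℝ)) * (∑' p, g p ^ (2:ℝ)) ^ (1/(2:ℝ))) ^ 2 := by
        gcongr
    _ = (∑' p, f p ^ 2) * (∑' p, g p ^ 2) := by
        rw [mul_pow, ← ENNReal.rpow_natCast (_ ^ (1/(2:ℝ))) 2, ← ENNReal.rpow_mul,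
          ← ENNReal.rpow_natCast (_ ^ (1/(2:ℝ))) 2, ← ENNReal.rpow_mul]
        norm_num

lemma double_sum_le (a b : ℤ × ℤ → ℝ≥0∞) :
    ∑' jk : ℤ × ℤ, (∑' p, a (jk.1, p) * b (p, jk.2)) ^ 2 ≤
      (∑' x : ℤ × ℤ, a x ^ 2) * (∑' x : ℤ × ℤ, b x ^ 2) := by
  calc ∑' jk : ℤ × ℤ, (∑' p, a (jk.1, p) * b (p, jk.2)) ^ 2
      ≤ ∑' jk : ℤ × ℤ, (∑' p, a (jk.1, p) ^ 2) * (∑' p, b (p, jk.2) ^ 2) :=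
        ENNReal.tsum_le_tsum fun jk => cs_tsum _ _
    _ = (∑' x : ℤ × ℤ, a x ^ 2) * (∑' x : ℤ × ℤ, b x ^ 2) := by
        rw [ENNReal.tsum_prod (f := fun j k => (∑' p, a (j, p) ^ 2) * (∑' p, b (p, k) ^ 2)),
          ENNReal.tsum_prod (f := fun x y => a (x, y) ^ 2),
          ENNReal.tsum_prod (f := fun x y => b (x, y) ^ 2)]
        rw [ENNReal.tsum_comm (f := fun p k => b (p, k) ^ 2)]
        simp_rw [ENNReal.tsum_mul_left]
        rw [ENNReal.tsum_mul_right]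

lemma sq_add_sq_ennreal (x y : ℝ≥0∞) : (x + y)^2 ≤ 2*x^2 + 2*y^2 := by
  cases x using ENNReal.recTopCoe with
  | top =>
    have : (2:ℝ≥0∞) * ⊤^2 + 2*y^2 = ⊤ := by
      rw [ENNReal.top_pow (by norm_num), ENNReal.mul_top (by norm_num)]; simp
    rw [this]; exact le_top
  | coe x =>
    cases y using ENNReal.recTopCoe with
    | top =>
      have : (2:ℝ≥0∞) * (x:ℝ≥0∞)^2 + 2*⊤^2 = ⊤ := by
        rw [ENNReal.top_pow (by norm_num), ENNReal.mul_top (by norm_num)]; simp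
      rw [this]; exact le_top
    | coe y =>
      have h2 : (2:ℝ≥0∞) = ((2:ℝ≥0):ℝ≥0∞) := by norm_num
      rw [← ENNReal.coe_add, ← ENNReal.coe_pow, ← ENNReal.coe_pow, ← ENNReal.coe_pow, h2,
        ← ENNReal.coe_mul, ← ENNReal.coe_mul, ← ENNReal.coe_add, ENNReal.coe_le_coe,
        ← NNReal.coe_le_coe]
      push_cast
      nlinarith [sq_nonneg ((x:ℝ) - y)]

lemma enorm_tsum_le (f : ℤ → ℂ) : (‖∑' p, f p‖₊ : ℝ≥0∞) ≤ ∑' p, (‖f p‖₊ : ℝ≥0∞) := by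
  by_cases h : Summable fun p => ‖f p‖₊
  · rw [← ENNReal.coe_tsum h]
    exact_mod_cast nnnorm_tsum_le h
  · rw [show (∑' p, (‖f p‖₊ : ℝ≥0∞)) = ⊤ by
      by_contra hne
      exact h (ENNReal.tsum_coe_ne_top_iff_summable.mp hne)]
    exact le_top

lemma pointwise_bound (α : ℝ) (hα : 0 ≤ α) (A B : ℤ → ℤ → ℂ) (j k : ℤ) :
    sW α j k * (‖(∑' p : ℤ, A j p * B p k) - (∑' p : ℤ, B j p * A p k)‖₊ : ℝ≥0∞) ≤
      (∑' p, (sW α j p * (‖A j p‖₊ : ℝ≥0∞)) * (sW α p k * (‖B p k‖₊ : ℝ≥0∞))) +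
        ∑' p, (sW α j p * (‖B j p‖₊ : ℝ≥0∞)) * (sW α p k * (‖A p k‖₊ : ℝ≥0∞)) := by
  have hsub : (‖(∑' p : ℤ, A j p * B p k) - (∑' p : ℤ, B j p * A p k)‖₊ : ℝ≥0∞) ≤
      (‖∑' p : ℤ, A j p * B p k‖₊ : ℝ≥0∞) + (‖∑' p : ℤ, B j p * A p k‖₊ : ℝ≥0∞) := by
    exact_mod_cast nnnorm_sub_le _ _
  calc sW α j k * (‖(∑' p : ℤ, A j p * B p k) - (∑' p : ℤ, B j p * A p k)‖₊ : ℝ≥0∞)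
      ≤ sW α j k * ((‖∑' p : ℤ, A j p * B p k‖₊ : ℝ≥0∞) +
          (‖∑' p : ℤ, B j p * A p k‖₊ : ℝ≥0∞)) := mul_le_mul_right hsub _
    _ ≤ sW α j k * ((∑' p, (‖A j p * B p k‖₊ : ℝ≥0∞)) + ∑' p, (‖B j p * A p k‖₊ : ℝ≥0∞)) := by
        gcongr
        exacts [enorm_tsum_le _, enorm_tsum_le _]
    _ = (∑' p, sW α j k * (‖A j p * B p k‖₊ : ℝ≥0∞)) +
          ∑' p, sW α j k * (‖B j p * A p k‖₊ : ℝ≥0∞) := by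
        rw [mul_add, ENNReal.tsum_mul_left, ENNReal.tsum_mul_left]
    _ ≤ (∑' p, (sW α j p * (‖A j p‖₊ : ℝ≥0∞)) * (sW α p k * (‖B p k‖₊ : ℝ≥0∞))) +
          ∑' p, (sW α j p * (‖B j p‖₊ : ℝ≥0∞)) * (sW α p k * (‖A p k‖₊ : ℝ≥0∞)) := by
        refine add_le_add (ENNReal.tsum_le_tsum fun p => ?_) (ENNReal.tsum_le_tsum fun p => ?_)
        · calc sW α j k * (‖A j p * B p k‖₊ : ℝ≥0∞)
              ≤ (sW α j p * sW α p k) * (‖A j p * B p k‖₊ : ℝ≥0∞) :=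
                mul_le_mul_left (sW_submul α hα j p k) _
            _ = (sW α j p * (‖A j p‖₊ : ℝ≥0∞)) * (sW α p k * (‖B p k‖₊ : ℝ≥0∞)) := by
                rw [nnnorm_mul, ENNReal.coe_mul]; ring
        · calc sW α j k * (‖B j p * A p k‖₊ : ℝ≥0∞)
              ≤ (sW α j p * sW α p k) * (‖B j p * A p k‖₊ : ℝ≥0∞) :=
                mul_le_mul_left (sW_submul α hα j p k) _
            _ = (sW α j p * (‖B j p‖₊ : ℝ≥0∞)) * (sW α p k * (‖A p k‖₊ : ℝ≥0∞)) := by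
                rw [nnnorm_mul, ENNReal.coe_mul]; ring

set_option maxHeartbeats 1000000 in
lemma main_ennreal (α : ℝ) (hα : 0 ≤ α) (A B : ℤ → ℤ → ℂ) :
    (∑' jk : ℤ × ℤ, ENNReal.ofReal (sobolevWeight α jk.1 jk.2 *
        ‖(∑' p : ℤ, A jk.1 p * B p jk.2) - (∑' p : ℤ, B jk.1 p * A p jk.2)‖ ^ 2)) ≤
      4 * ((∑' x : ℤ × ℤ, (sW α x.1 x.2 * (‖A x.1 x.2‖₊ : ℝ≥0∞)) ^ 2) *
        ∑' x : ℤ × ℤ, (sW α x.1 x.2 * (‖B x.1 x.2‖₊ : ℝ≥0∞)) ^ 2) := by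
  set a : ℤ × ℤ → ℝ≥0∞ := fun x => sW α x.1 x.2 * (‖A x.1 x.2‖₊ : ℝ≥0∞) with ha
  set b : ℤ × ℤ → ℝ≥0∞ := fun x => sW α x.1 x.2 * (‖B x.1 x.2‖₊ : ℝ≥0∞) with hb
  calc (∑' jk : ℤ × ℤ, ENNReal.ofReal (sobolevWeight α jk.1 jk.2 *
          ‖(∑' p : ℤ, A jk.1 p * B p jk.2) - (∑' p : ℤ, B jk.1 p * A p jk.2)‖ ^ 2))
      = ∑' jk : ℤ × ℤ, (sW α jk.1 jk.2 *
          (‖(∑' p : ℤ, A jk.1 p * B p jk.2) - (∑' p : ℤ, B jk.1 p * A p jk.2)‖₊ : ℝ≥0∞)) ^ 2 := by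
        refine tsum_congr fun jk => ?_
        exact ofReal_weight_sq α jk.1 jk.2 _
    _ ≤ ∑' jk : ℤ × ℤ, ((∑' p, a (jk.1, p) * b (p, jk.2)) +
          ∑' p, b (jk.1, p) * a (p, jk.2)) ^ 2 := by
        refine ENNReal.tsum_le_tsum fun jk => ?_
        have := pointwise_bound α hα A B jk.1 jk.2
        exact pow_le_pow_left' this 2
    _ ≤ ∑' jk : ℤ × ℤ, (2 * (∑' p, a (jk.1, p) * b (p, jk.2)) ^ 2 +
          2 * (∑' p, b (jk.1, p) * a (p, jk.2)) ^ 2) :=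
        ENNReal.tsum_le_tsum fun jk => sq_add_sq_ennreal _ _
    _ = 2 * (∑' jk : ℤ × ℤ, (∑' p, a (jk.1, p) * b (p, jk.2)) ^ 2) +
          2 * ∑' jk : ℤ × ℤ, (∑' p, b (jk.1, p) * a (p, jk.2)) ^ 2 := by
        rw [ENNReal.tsum_add, ENNReal.tsum_mul_left, ENNReal.tsum_mul_left]
    _ ≤ 2 * ((∑' x : ℤ × ℤ, a x ^ 2) * (∑' x : ℤ × ℤ, b x ^ 2)) +
          2 * ((∑' x : ℤ × ℤ, b x ^ 2) * (∑' x : ℤ × ℤ, a x ^ 2)) := by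
        gcongr
        exacts [double_sum_le a b, double_sum_le b a]
    _ = 4 * ((∑' x : ℤ × ℤ, a x ^ 2) * (∑' x : ℤ × ℤ, b x ^ 2)) := by ring

theorem sobolev_norm_commutator_bound (α : ℝ) (hα : 0 ≤ α) (A B : ℤ → ℤ → ℂ)
    (hA : Summable fun jp : ℤ × ℤ => sobolevWeight α jp.1 jp.2 * ‖A jp.1 jp.2‖ ^ 2)
    (hB : Summable fun rk : ℤ × ℤ => sobolevWeight α rk.1 rk.2 * ‖B rk.1 rk.2‖ ^ 2) :
    Real.sqrt (∑' jk : ℤ × ℤ,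
        sobolevWeight α jk.1 jk.2 *
          ‖(∑' p : ℤ, A jk.1 p * B p jk.2) - (∑' p : ℤ, B jk.1 p * A p jk.2)‖ ^ 2) ≤
      2 * Real.sqrt (∑' jp : ℤ × ℤ, sobolevWeight α jp.1 jp.2 * ‖A jp.1 jp.2‖ ^ 2) *
        Real.sqrt (∑' rk : ℤ × ℤ, sobolevWeight α rk.1 rk.2 * ‖B rk.1 rk.2‖ ^ 2) := by
  have hEA : (∑' x : ℤ × ℤ, (sW α x.1 x.2 * (‖A x.1 x.2‖₊ : ℝ≥0∞)) ^ 2) =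
      ENNReal.ofReal (∑' jp : ℤ × ℤ, sobolevWeight α jp.1 jp.2 * ‖A jp.1 jp.2‖ ^ 2) := by
    have h := ENNReal.ofReal_tsum_of_nonneg
      (f := fun jp : ℤ × ℤ => sobolevWeight α jp.1 jp.2 * ‖A jp.1 jp.2‖ ^ 2)
      (fun x => mul_nonneg (sobolevWeight_nonneg α x.1 x.2) (sq_nonneg _)) hA
    rw [h]
    refine (tsum_congr fun x => ?_).symm
    exact ofReal_weight_sq α x.1 x.2 _
  have hEB : (∑' x : ℤ × ℤ, (sW α x.1 x.2 * (‖B x.1 x.2‖₊ : ℝ≥0∞)) ^ 2) =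
      ENNReal.ofReal (∑' rk : ℤ × ℤ, sobolevWeight α rk.1 rk.2 * ‖B rk.1 rk.2‖ ^ 2) := by
    have h := ENNReal.ofReal_tsum_of_nonneg
      (f := fun rk : ℤ × ℤ => sobolevWeight α rk.1 rk.2 * ‖B rk.1 rk.2‖ ^ 2)
      (fun x => mul_nonneg (sobolevWeight_nonneg α x.1 x.2) (sq_nonneg _)) hB
    rw [h]
    refine (tsum_congr fun x => ?_).symm
    exact ofReal_weight_sq α x.1 x.2 _
  have hSA0 : 0 ≤ ∑' jp : ℤ × ℤ, sobolevWeight α jp.1 jp.2 * ‖A jp.1 jp.2‖ ^ 2 :=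
    tsum_nonneg fun x => mul_nonneg (sobolevWeight_nonneg α x.1 x.2) (by positivity)
  have hSB0 : 0 ≤ ∑' rk : ℤ × ℤ, sobolevWeight α rk.1 rk.2 * ‖B rk.1 rk.2‖ ^ 2 :=
    tsum_nonneg fun x => mul_nonneg (sobolevWeight_nonneg α x.1 x.2) (by positivity)
  by_cases hC : Summable fun jk : ℤ × ℤ => sobolevWeight α jk.1 jk.2 *
      ‖(∑' p : ℤ, A jk.1 p * B p jk.2) - (∑' p : ℤ, B jk.1 p * A p jk.2)‖ ^ 2
  · have key : (∑' jk : ℤ × ℤ, sobolevWeight α jk.1 jk.2 *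
        ‖(∑' p : ℤ, A jk.1 p * B p jk.2) - (∑' p : ℤ, B jk.1 p * A p jk.2)‖ ^ 2) ≤
        4 * ((∑' jp : ℤ × ℤ, sobolevWeight α jp.1 jp.2 * ‖A jp.1 jp.2‖ ^ 2) *
          ∑' rk : ℤ × ℤ, sobolevWeight α rk.1 rk.2 * ‖B rk.1 rk.2‖ ^ 2) := by
      rw [← ENNReal.ofReal_le_ofReal_iff (by positivity)]
      have h := ENNReal.ofReal_tsum_of_nonneg
        (f := fun jk : ℤ × ℤ => sobolevWeight α jk.1 jk.2 *
          ‖(∑' p : ℤ, A jk.1 p * B p jk.2) - (∑' p : ℤ, B jk.1 p * A p jk.2)‖ ^ 2)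
        (fun x => mul_nonneg (sobolevWeight_nonneg α x.1 x.2) (sq_nonneg _)) hC
      rw [h]
      refine (main_ennreal α hα A B).trans_eq ?_
      rw [hEA, hEB, ENNReal.ofReal_mul (by norm_num), ENNReal.ofReal_mul hSA0]
      norm_num
    calc Real.sqrt (∑' jk : ℤ × ℤ, sobolevWeight α jk.1 jk.2 *
          ‖(∑' p : ℤ, A jk.1 p * B p jk.2) - (∑' p : ℤ, B jk.1 p * A p jk.2)‖ ^ 2)
        ≤ Real.sqrt (4 * ((∑' jp : ℤ × ℤ, sobolevWeight α jp.1 jp.2 * ‖A jp.1 jp.2‖ ^ 2) *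
            ∑' rk : ℤ × ℤ, sobolevWeight α rk.1 rk.2 * ‖B rk.1 rk.2‖ ^ 2)) :=
          Real.sqrt_le_sqrt key
      _ = 2 * Real.sqrt (∑' jp : ℤ × ℤ, sobolevWeight α jp.1 jp.2 * ‖A jp.1 jp.2‖ ^ 2) *
            Real.sqrt (∑' rk : ℤ × ℤ, sobolevWeight α rk.1 rk.2 * ‖B rk.1 rk.2‖ ^ 2) := by
          rw [Real.sqrt_mul (by norm_num), Real.sqrt_mul hSA0,
            show Real.sqrt 4 = 2 by
              rw [show (4:ℝ) = 2^2 by norm_num, Real.sqrt_sq (by norm_num)]]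
          ring
  · rw [tsum_eq_zero_of_not_summable hC, Real.sqrt_zero]
    positivity
end

section
/- Let D be the change-of-basis matrix on ℓ²(ℤ) associated to a sequence (a_l)_{l≥1}: D e_m = Σ_{l≥1} a_l e_{ml} for m ≥ 1, D e_{−m} = Σ_{l≥1} conj(a_l) e_{−ml} for m ≥ 1, and D e_0 = e_0. If Σ_{l≥1} |a_l| < ∞, then D is bounded on ℓ²(ℤ) with operator norm ‖D‖ ≤ max{1, Σ_{l=1}^∞ |a_l|}. -/
open scoped ComplexConjugate

/-- The matrix of the Dirichlet-ring change-of-basis map `D` on ℓ²(ℤ)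
associated with the coefficient sequence `(a_l)_{l ≥ 1}`. -/
noncomputable def dirichletMatrix (a : ℕ → ℂ) : ℤ → ℤ → ℂ := fun k m =>
  if m = 0 then (if k = 0 then 1 else 0)
  else if 0 < m then (if 0 < k ∧ m ∣ k then a (k / m).toNat else 0)
  else (if k < 0 ∧ m ∣ k then conj (a (k / m).toNat) else 0)

/-!
Schur test. Cauchy–Schwarz with weights `|D k m|` gives
`|(D x)_k|² ≤ (∑_m |D k m|) · ∑_m |D k m| |x_m|²`; summing over `k` and exchanging the two
sums turns the inner weight into a column sum. Every nonzero entry `D k m` with `m ≠ 0` is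
`a_l` or its conjugate for `l = k / m ≥ 1`, and `l` determines `m` within a row and `k` within a
column, so all row and column sums are at most `∑ |a_l|`; row and column `0` contribute the
entry `1`. All sums are taken in `ℝ≥0∞`, where they may be exchanged freely.
-/

open scoped NNReal ENNReal

open Function

theorem ENNReal.sq_tsum_coe_mul_le {ι : Type*} (w y : ι → ℝ≥0) :
    (∑' j, (w j : ℝ≥0∞) * y j) ^ 2 ≤
      (∑' j, (w j : ℝ≥0∞)) * ∑' j, (w j : ℝ≥0∞) * y j ^ 2 := by
  rw [ENNReal.tsum_eq_iSup_sum, ENNReal.iSup_pow]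
  refine iSup_le fun s => ?_
  have hcs : (∑ j ∈ s, w j * y j) ^ 2 ≤ (∑ j ∈ s, w j) * ∑ j ∈ s, w j * y j ^ 2 :=
    Finset.sum_sq_le_sum_mul_sum_of_sq_le_mul s (fun _ _ => zero_le) (fun _ _ => zero_le)
      fun j _ => (by ring : (w j * y j) ^ 2 = w j * (w j * y j ^ 2)).le
  calc (∑ j ∈ s, (w j : ℝ≥0∞) * y j) ^ 2
      = ((∑ j ∈ s, w j * y j) ^ 2 : ℝ≥0) := by push_cast; rfl
    _ ≤ ((∑ j ∈ s, w j) * ∑ j ∈ s, w j * y j ^ 2 : ℝ≥0) := ENNReal.coe_le_coe.2 hcs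
    _ = (∑ j ∈ s, (w j : ℝ≥0∞)) * ∑ j ∈ s, (w j : ℝ≥0∞) * y j ^ 2 := by push_cast; rfl
    _ ≤ _ := by gcongr <;> exact ENNReal.sum_le_tsum s

theorem ENNReal.tsum_sq_tsum_mul_le {ι κ : Type*} (A : ι → κ → ℝ≥0) (x : κ → ℝ≥0)
    {R C : ℝ≥0∞} (hrow : ∀ i, ∑' j, (A i j : ℝ≥0∞) ≤ R)
    (hcol : ∀ j, ∑' i, (A i j : ℝ≥0∞) ≤ C) :
    ∑' i, (∑' j, (A i j : ℝ≥0∞) * x j) ^ 2 ≤ R * C * ∑' j, (x j : ℝ≥0∞) ^ 2 :=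
  calc ∑' i, (∑' j, (A i j : ℝ≥0∞) * x j) ^ 2
      ≤ ∑' i, R * ∑' j, (A i j : ℝ≥0∞) * x j ^ 2 := ENNReal.tsum_le_tsum fun i =>
        (ENNReal.sq_tsum_coe_mul_le _ _).trans (by gcongr; exact hrow i)
    _ = R * ∑' j, (∑' i, (A i j : ℝ≥0∞)) * x j ^ 2 := by
        rw [ENNReal.tsum_mul_left, ENNReal.tsum_comm]
        simp only [ENNReal.tsum_mul_right]
    _ ≤ R * ∑' j, C * x j ^ 2 := by gcongr with j; exact hcol j
    _ = R * C * ∑' j, (x j : ℝ≥0∞) ^ 2 := by rw [ENNReal.tsum_mul_left, mul_assoc]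

theorem ENNReal.tsum_le_tsum_of_injOn {α β : Type*} {f : α → ℝ≥0∞} {g : β → ℝ≥0∞}
    (e : α → β) (he : Set.InjOn e (support f)) (hfg : ∀ x ∈ support f, f x ≤ g (e x)) :
    ∑' x, f x ≤ ∑' y, g y := by
  rw [← tsum_subtype_support]
  calc ∑' x : support f, f x ≤ ∑' x : support f, g (e x) :=
        ENNReal.tsum_le_tsum fun x => hfg x x.2
    _ ≤ ∑' y, g y := ENNReal.tsum_comp_le_tsum_of_injective he.injective g

theorem summable_and_tsum_le_of_tsum_ofReal_le {ι : Type*} {f : ι → ℝ} (hf : ∀ i, 0 ≤ f i)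
    {B : ℝ} (hB : 0 ≤ B) (h : ∑' i, ENNReal.ofReal (f i) ≤ ENNReal.ofReal B) :
    Summable f ∧ ∑' i, f i ≤ B := by
  have hs : Summable f := by
    simpa only [ENNReal.toReal_ofReal (hf _)] using
      ENNReal.summable_toReal (ne_top_of_le_ne_top ENNReal.ofReal_ne_top h)
  refine ⟨hs, (ENNReal.ofReal_le_ofReal_iff hB).1 ?_⟩
  rwa [ENNReal.ofReal_tsum_of_nonneg hf hs]

theorem ofReal_norm_sq {E : Type*} [SeminormedAddGroup E] (v : E) :
    ENNReal.ofReal (‖v‖ ^ 2) = ‖v‖ₑ ^ 2 := by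
  rw [ENNReal.ofReal_pow (norm_nonneg _), ofReal_norm]

theorem schur_test {ι κ 𝕜 : Type*} [NormedRing 𝕜] [CompleteSpace 𝕜] (M : ι → κ → 𝕜)
    {R C : ℝ≥0} (hrow : ∀ i, ∑' j, ‖M i j‖ₑ ≤ R) (hcol : ∀ j, ∑' i, ‖M i j‖ₑ ≤ C)
    (x : κ → 𝕜) (hx : Summable fun j => ‖x j‖ ^ 2) :
    (∀ i, Summable fun j => M i j * x j) ∧
      Summable (fun i => ‖∑' j, M i j * x j‖ ^ 2) ∧
      ∑' i, ‖∑' j, M i j * x j‖ ^ 2 ≤ R * C * ∑' j, ‖x j‖ ^ 2 := by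
  have hmul : ∀ i j, ‖M i j * x j‖ₑ ≤ ‖M i j‖ₑ * ‖x j‖ₑ := fun i j => by
    simpa only [enorm_eq_nnnorm, ← ENNReal.coe_mul] using
      ENNReal.coe_le_coe.2 (nnnorm_mul_le _ _)
  have hB : 0 ≤ (R * C * ∑' j, ‖x j‖ ^ 2 : ℝ) := by positivity
  have hbound : ENNReal.ofReal (R * C * ∑' j, ‖x j‖ ^ 2) = R * C * ∑' j, ‖x j‖ₑ ^ 2 := by
    rw [ENNReal.ofReal_mul (by positivity), ← NNReal.coe_mul, ENNReal.ofReal_coe_nnreal,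
      ENNReal.ofReal_tsum_of_nonneg (fun _ => sq_nonneg _) hx, ENNReal.coe_mul]
    simp only [ofReal_norm_sq]
  have hschur : ∑' i, (∑' j, ‖M i j‖ₑ * ‖x j‖ₑ) ^ 2 ≤ R * C * ∑' j, ‖x j‖ₑ ^ 2 := by
    simp only [enorm_eq_nnnorm] at hrow hcol ⊢
    exact ENNReal.tsum_sq_tsum_mul_le (fun i j => ‖M i j‖₊) (fun j => ‖x j‖₊) hrow hcol
  have hrow_summable : ∀ i, Summable fun j => M i j * x j := fun i => by
    have hsq : (∑' j, ‖M i j‖ₑ * ‖x j‖ₑ) ^ 2 ≠ ∞ :=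
      ne_top_of_le_ne_top (hbound ▸ ENNReal.ofReal_ne_top) ((ENNReal.le_tsum i).trans hschur)
    exact .of_enorm <| ne_top_of_le_ne_top
      ((ENNReal.pow_ne_top_iff.1 hsq).resolve_right two_ne_zero) (ENNReal.tsum_le_tsum (hmul i))
  refine ⟨hrow_summable, summable_and_tsum_le_of_tsum_ofReal_le (fun _ => sq_nonneg _) hB ?_⟩
  refine le_trans (ENNReal.tsum_le_tsum fun i => ?_) (hbound ▸ hschur)
  rw [ofReal_norm_sq]
  gcongr
  exact enorm_tsum_le_tsum_enorm.trans (ENNReal.tsum_le_tsum (hmul i))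

section dirichletMatrix

variable (a : ℕ → ℂ)

theorem dirichletMatrix_zero_zero : dirichletMatrix a 0 0 = 1 := by simp [dirichletMatrix]

theorem dirichletMatrix_of_ne_zero_right {k : ℤ} (hk : k ≠ 0) : dirichletMatrix a k 0 = 0 := by
  simp [dirichletMatrix, hk]

variable {a}

theorem dvd_and_ediv_pos_of_dirichletMatrix_ne_zero {k m : ℤ} (hm : m ≠ 0)
    (h : dirichletMatrix a k m ≠ 0) : m ∣ k ∧ 0 < k / m := by
  rw [dirichletMatrix, if_neg hm] at h
  split_ifs at h with hpos hk hk
  · exact ⟨hk.2, Int.ediv_pos_of_pos_of_dvd hk.1 hpos.le hk.2⟩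
  · exact absurd rfl h
  · refine ⟨hk.2, ?_⟩
    obtain ⟨q, rfl⟩ := hk.2
    rw [Int.mul_ediv_cancel_left _ hm]
    nlinarith
  · exact absurd rfl h

theorem enorm_dirichletMatrix_le {k m : ℤ} (hm : m ≠ 0) :
    ‖dirichletMatrix a k m‖ₑ ≤ ‖a (k / m).toNat‖ₑ := by
  rw [dirichletMatrix, if_neg hm]
  split_ifs <;> simp

theorem tsum_enorm_dirichletMatrix_row_le (k : ℤ) :
    ∑' m, ‖dirichletMatrix a k m‖ₑ ≤ max 1 (∑' l : ℕ, ‖a (l + 1)‖ₑ) := by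
  rcases eq_or_ne k 0 with rfl | hk
  · rw [tsum_eq_single 0 fun m hm => ?_, dirichletMatrix_zero_zero, enorm_one]
    · exact le_max_left _ _
    · by_contra h
      simpa using (dvd_and_ediv_pos_of_dirichletMatrix_ne_zero hm (enorm_ne_zero.1 h)).2
  have hsupp : ∀ m ∈ support fun m => ‖dirichletMatrix a k m‖ₑ,
      m ≠ 0 ∧ m ∣ k ∧ 0 < k / m := by
    intro m hm
    have hD : dirichletMatrix a k m ≠ 0 := enorm_ne_zero.1 hm
    have hm0 : m ≠ 0 := by rintro rfl; exact hD (dirichletMatrix_of_ne_zero_right a hk)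
    exact ⟨hm0, dvd_and_ediv_pos_of_dirichletMatrix_ne_zero hm0 hD⟩
  refine le_max_of_le_right
    (ENNReal.tsum_le_tsum_of_injOn (fun m => (k / m).toNat - 1) ?_ ?_)
  · intro m hm m' hm' heq
    obtain ⟨-, hmk, hq⟩ := hsupp m hm
    obtain ⟨-, hmk', hq'⟩ := hsupp m' hm'
    have hdiv : k / m = k / m' := by simp only at heq; omega
    refine mul_right_cancel₀ hq.ne' ?_
    rw [Int.mul_ediv_cancel' hmk, hdiv, Int.mul_ediv_cancel' hmk']
  · intro m hm
    obtain ⟨hm0, -, hq⟩ := hsupp m hm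
    rw [Nat.sub_add_cancel (by omega)]
    exact enorm_dirichletMatrix_le hm0

theorem tsum_enorm_dirichletMatrix_col_le (m : ℤ) :
    ∑' k, ‖dirichletMatrix a k m‖ₑ ≤ max 1 (∑' l : ℕ, ‖a (l + 1)‖ₑ) := by
  rcases eq_or_ne m 0 with rfl | hm
  · rw [tsum_eq_single 0 fun k hk => by rw [dirichletMatrix_of_ne_zero_right a hk, enorm_zero],
      dirichletMatrix_zero_zero, enorm_one]
    exact le_max_left _ _
  have hsupp : ∀ k ∈ support fun k => ‖dirichletMatrix a k m‖ₑ, m ∣ k ∧ 0 < k / m :=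
    fun k hk => dvd_and_ediv_pos_of_dirichletMatrix_ne_zero hm (enorm_ne_zero.1 hk)
  refine le_max_of_le_right
    (ENNReal.tsum_le_tsum_of_injOn (fun k => (k / m).toNat - 1) ?_ ?_)
  · intro k hk k' hk' heq
    obtain ⟨hmk, hq⟩ := hsupp k hk
    obtain ⟨hmk', hq'⟩ := hsupp k' hk'
    have hdiv : k / m = k' / m := by simp only at heq; omega
    rw [← Int.mul_ediv_cancel' hmk, hdiv, Int.mul_ediv_cancel' hmk']
  · intro k hk
    obtain ⟨-, hq⟩ := hsupp k hk
    rw [Nat.sub_add_cancel (by omega)]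
    exact enorm_dirichletMatrix_le hm

end dirichletMatrix

theorem dirichlet_matrix_operator_norm_bound (a : ℕ → ℂ)
    (ha : Summable fun l : ℕ => ‖a (l + 1)‖) :
    ∀ x : ℤ → ℂ, Summable (fun k : ℤ => ‖x k‖ ^ 2) →
      (∀ k : ℤ, Summable fun m : ℤ => dirichletMatrix a k m * x m) ∧
      Summable (fun k : ℤ => ‖∑' m : ℤ, dirichletMatrix a k m * x m‖ ^ 2) ∧
      (∑' k : ℤ, ‖∑' m : ℤ, dirichletMatrix a k m * x m‖ ^ 2) ≤
        (max 1 (∑' l : ℕ, ‖a (l + 1)‖)) ^ 2 * ∑' k : ℤ, ‖x k‖ ^ 2 := by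
  intro x hx
  set C : ℝ≥0 := max 1 (∑' l : ℕ, ‖a (l + 1)‖₊)
  have hCe : (C : ℝ≥0∞) = max 1 (∑' l : ℕ, ‖a (l + 1)‖ₑ) := by
    rw [ENNReal.coe_max, ENNReal.coe_tsum (NNReal.summable_coe.1 ha)]
    simp only [ENNReal.coe_one, enorm_eq_nnnorm]
  have hC : (C : ℝ) = max 1 (∑' l : ℕ, ‖a (l + 1)‖) := by
    rw [NNReal.coe_max, NNReal.coe_tsum]
    simp only [NNReal.coe_one, coe_nnnorm]
  obtain ⟨hrows, hsum, hle⟩ := schur_test (dirichletMatrix a) (R := C) (C := C)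
    (fun k => hCe ▸ tsum_enorm_dirichletMatrix_row_le k)
    (fun m => hCe ▸ tsum_enorm_dirichletMatrix_col_le m) x hx
  exact ⟨hrows, hsum, by rwa [← hC, sq]⟩
end

section
/- Let α ≥ 0, σ > α + 1, and suppose (c_d)_{d≥2} are nonnegative reals with c_d ≤ K · d^{1/2−σ} · log d for all d ≥ 2. Let (f̂_m)_{m≥1} satisfy Σ_{m≥1} m^{2α}|f̂_m|² ≤ M² < ∞. Then for every k ≥ 1, ( Σ_{d | k, d > 1} c_d · |f̂_{k/d}| )² ≤ M² · K² · k^{−2α} · ζ''(2(σ−α)−1), where ζ'' denotes the second derivative of the Riemann zeta function. -/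
/-!
Write `c_d ‖f (k/d)‖ = (c_d (k/d)^{-α}) ((k/d)^α ‖f (k/d)‖)` and apply Cauchy–Schwarz over the
divisors `d > 1` of `k`. As `d ↦ k/d` permutes the divisors of `k`, the second factor contributes
at most `∑ m^{2α} ‖f m‖² ≤ M²`. By `c_d ≤ K d^{1/2-σ} log d` and `(k/d)^{-2α} = k^{-2α} d^{2α}`,
the first contributes at most `K² k^{-2α} ∑ (log d)² / d^{2(σ-α)-1}`, a partial sum of the
Dirichlet series `∑ (log n)² n^{-s}` of `ζ''(s)`, which converges because `s = 2(σ-α)-1 > 1`.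
-/

open LSeries Finset

lemma LSeries.logMul_iterate_apply (f : ℕ → ℂ) (m n : ℕ) :
    logMul^[m] f n = Complex.log n ^ m * f n := by
  induction m with
  | zero => simp
  | succ m ih =>
    rw [Function.iterate_succ_apply', logMul, ih, pow_succ]
    ring

theorem hasSum_iteratedDeriv_riemannZeta {s : ℂ} (hs : 1 < s.re) (m : ℕ) :
    HasSum (fun n : ℕ => (-Complex.log n) ^ m / (n : ℂ) ^ s) (iteratedDeriv m riemannZeta s) := by
  have habs : abscissaOfAbsConv 1 < s.re := by
    rw [abscissaOfAbsConv_one]; exact_mod_cast hs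
  have hζ : riemannZeta =ᶠ[nhds s] LSeries 1 := by
    filter_upwards [(isOpen_lt continuous_const Complex.continuous_re).mem_nhds hs] with z hz
    exact (LSeries_one_eq_riemannZeta hz).symm
  rw [hζ.iteratedDeriv_eq, LSeries_iteratedDeriv m habs]
  have hsum : LSeriesSummable (logMul^[m] 1) s :=
    LSeriesSummable_of_abscissaOfAbsConv_lt_re (absicssaOfAbsConv_logPowMul.symm ▸ habs)
  refine (hsum.LSeriesHasSum.mul_left ((-1) ^ m)).congr_fun fun n => ?_
  rcases eq_or_ne n 0 with rfl | hn
  · have hs0 : s ≠ 0 := by rintro rfl; norm_num at hs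
    simp [Complex.zero_cpow hs0]
  · rw [term_of_ne_zero hn, logMul_iterate_apply, neg_pow]
    simp [mul_div_assoc]

theorem hasSum_log_sq_div_rpow {s : ℝ} (hs : 1 < s) :
    HasSum (fun n : ℕ => Real.log n ^ 2 / (n : ℝ) ^ s)
      (iteratedDeriv 2 riemannZeta (s : ℂ)).re := by
  refine (Complex.reCLM.hasSum
    (hasSum_iteratedDeriv_riemannZeta (s := s) (by simpa) 2)).congr_fun fun n => ?_
  rw [Complex.reCLM_apply, ← Complex.ofReal_natCast, ← Complex.ofReal_log (Nat.cast_nonneg n),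
    ← Complex.ofReal_cpow (Nat.cast_nonneg n), ← Complex.ofReal_neg, ← Complex.ofReal_pow,
    ← Complex.ofReal_div, Complex.ofReal_re, neg_sq]

theorem Finset.sum_le_tsum_succ {t : Finset ℕ} (ht : 0 ∉ t) {g : ℕ → ℝ} (hg : ∀ n, 0 ≤ g n)
    (hsum : Summable fun m => g (m + 1)) : ∑ n ∈ t, g n ≤ ∑' m, g (m + 1) := by
  have hpred : Set.InjOn (· - 1) (t : Set ℕ) := fun a ha b hb hab => by
    have := ne_of_mem_of_not_mem ha ht
    have := ne_of_mem_of_not_mem hb ht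
    simp only at hab
    omega
  calc ∑ n ∈ t, g n = ∑ m ∈ t.image (· - 1), g (m + 1) := by
        rw [sum_image hpred]
        refine sum_congr rfl fun n hn => ?_
        rw [Nat.sub_add_cancel (Nat.pos_of_ne_zero (ne_of_mem_of_not_mem hn ht))]
    _ ≤ ∑' m, g (m + 1) := hsum.sum_le_tsum _ fun m _ => hg _

theorem Nat.sum_div_le_tsum_succ {k : ℕ} {s : Finset ℕ} (hs : s ⊆ k.divisors) {g : ℕ → ℝ}
    (hg : ∀ n, 0 ≤ g n) (hsum : Summable fun m => g (m + 1)) :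
    ∑ d ∈ s, g (k / d) ≤ ∑' m, g (m + 1) :=
  calc ∑ d ∈ s, g (k / d) ≤ ∑ d ∈ k.divisors, g (k / d) :=
        sum_le_sum_of_subset_of_nonneg hs fun _ _ _ => hg _
    _ = ∑ d ∈ k.divisors, g d := Nat.sum_div_divisors k g
    _ ≤ ∑' m, g (m + 1) := sum_le_tsum_succ (by simp) hg hsum

theorem Finset.sq_sum_mul_le_sum_sq_div_mul_sum_sq_mul {ι : Type*} (s : Finset ι)
    (a b w : ι → ℝ) (hw : ∀ i ∈ s, w i ≠ 0) :
    (∑ i ∈ s, a i * b i) ^ 2 ≤ (∑ i ∈ s, (a i / w i) ^ 2) * ∑ i ∈ s, (w i * b i) ^ 2 := by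
  calc (∑ i ∈ s, a i * b i) ^ 2 = (∑ i ∈ s, a i / w i * (w i * b i)) ^ 2 := by
        congr 1
        exact sum_congr rfl fun i hi => by field_simp [hw i hi]
    _ ≤ _ := sum_mul_sq_le_sq_mul_sq s _ _

theorem sq_mul_rpow_mul_div_rpow_div {x y : ℝ} (hx : 0 < x) (hy : 0 < y) (K L α σ : ℝ) :
    (K * x ^ ((1 : ℝ) / 2 - σ) * L / (y / x) ^ α) ^ 2 =
      K ^ 2 * y ^ (-(2 * α)) * (L ^ 2 / x ^ (2 * (σ - α) - 1)) := by
  have hsq : ∀ {z : ℝ} (a : ℝ), 0 < z → (z ^ a) ^ 2 = z ^ (2 * a) := fun a hz => by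
    rw [← Real.rpow_mul_natCast hz.le]; ring_nf
  rw [div_pow, mul_pow, mul_pow, hsq _ hx, hsq _ (div_pos hy hx), Real.div_rpow hy.le hx.le,
    Real.rpow_neg hy.le]
  have hpow : x ^ (2 * ((1 : ℝ) / 2 - σ)) = (x ^ (2 * α) * x ^ (2 * (σ - α) - 1))⁻¹ := by
    rw [← Real.rpow_add hx, ← Real.rpow_neg hx.le]; ring_nf
  rw [hpow]
  field_simp

theorem sum_sq_div_rpow_div_le_iteratedDeriv_riemannZeta {k : ℕ} (hk : 0 < k) {α σ K : ℝ}
    (hσ : α + 1 < σ) {c : ℕ → ℝ} (hc0 : ∀ d : ℕ, 2 ≤ d → 0 ≤ c d)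
    (hc : ∀ d : ℕ, 2 ≤ d → c d ≤ K * (d : ℝ) ^ ((1:ℝ)/2 - σ) * Real.log d) :
    ∑ d ∈ k.divisors.filter (fun d => 1 < d), (c d / ((k / d : ℕ) : ℝ) ^ α) ^ 2 ≤
      K ^ 2 * (k : ℝ) ^ (-(2 * α)) *
        (iteratedDeriv 2 riemannZeta ((2 * (σ - α) - 1 : ℝ) : ℂ)).re := by
  have hZ := hasSum_log_sq_div_rpow (s := 2 * (σ - α) - 1) (by linarith)
  calc ∑ d ∈ k.divisors.filter (fun d => 1 < d), (c d / ((k / d : ℕ) : ℝ) ^ α) ^ 2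
      ≤ ∑ d ∈ k.divisors.filter (fun d => 1 < d),
          K ^ 2 * (k : ℝ) ^ (-(2 * α)) * (Real.log d ^ 2 / (d : ℝ) ^ (2 * (σ - α) - 1)) := by
        refine sum_le_sum fun d hd => ?_
        obtain ⟨⟨hdk, -⟩, hd1⟩ := by simpa only [mem_filter, Nat.mem_divisors] using hd
        have hd : (0 : ℝ) < d := by positivity
        rw [Nat.cast_div hdk hd.ne', ← sq_mul_rpow_mul_div_rpow_div hd (by positivity)]
        gcongr
        exacts [div_nonneg (hc0 d hd1) (by positivity), hc d hd1]
    _ ≤ _ := by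
        rw [← mul_sum]
        gcongr
        exact hZ.summable.sum_le_tsum _ (fun n _ => by positivity) |>.trans_eq hZ.tsum_eq

theorem sum_sq_rpow_mul_norm_div_le_tsum {k : ℕ} {s : Finset ℕ} (hs : s ⊆ k.divisors) (α : ℝ)
    (f : ℕ → ℂ) (hfs : Summable fun m : ℕ => ((m + 1 : ℕ) : ℝ) ^ (2 * α) * ‖f (m + 1)‖ ^ 2) :
    ∑ d ∈ s, (((k / d : ℕ) : ℝ) ^ α * ‖f (k / d)‖) ^ 2 ≤
      ∑' m : ℕ, ((m + 1 : ℕ) : ℝ) ^ (2 * α) * ‖f (m + 1)‖ ^ 2 := by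
  have hsq (n : ℕ) : ((n : ℝ) ^ α * ‖f n‖) ^ 2 = (n : ℝ) ^ (2 * α) * ‖f n‖ ^ 2 := by
    rw [mul_pow, ← Real.rpow_mul_natCast (Nat.cast_nonneg _), mul_comm α, Nat.cast_ofNat]
  simp only [hsq]
  exact Nat.sum_div_le_tsum_succ hs (g := fun n : ℕ => (n : ℝ) ^ (2 * α) * ‖f n‖ ^ 2)
    (fun n => by positivity) hfs

theorem broadband_divisor_sum_estimate_general (α σ K M : ℝ) (hσ : α + 1 < σ)
    (c : ℕ → ℝ) (hc0 : ∀ d : ℕ, 2 ≤ d → 0 ≤ c d)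
    (hc : ∀ d : ℕ, 2 ≤ d → c d ≤ K * (d : ℝ) ^ ((1:ℝ)/2 - σ) * Real.log d)
    (f : ℕ → ℂ)
    (hfs : Summable fun m : ℕ => ((m + 1 : ℕ) : ℝ) ^ (2 * α) * ‖f (m + 1)‖ ^ 2)
    (hfM : (∑' m : ℕ, ((m + 1 : ℕ) : ℝ) ^ (2 * α) * ‖f (m + 1)‖ ^ 2) ≤ M ^ 2) :
    ∀ k : ℕ, 1 ≤ k →
      (∑ d ∈ k.divisors.filter (fun d => 1 < d), c d * ‖f (k / d)‖) ^ 2 ≤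
        M ^ 2 * K ^ 2 * (k : ℝ) ^ (-(2 * α)) *
          (iteratedDeriv 2 riemannZeta ((2 * (σ - α) - 1 : ℝ) : ℂ)).re := by
  intro k hk
  set A := k.divisors.filter (fun d => 1 < d)
  have hw : ∀ d ∈ A, ((k / d : ℕ) : ℝ) ^ α ≠ 0 := fun d hd => by
    obtain ⟨⟨hdk, -⟩, -⟩ := by simpa only [A, mem_filter, Nat.mem_divisors] using hd
    have : 0 < k / d := Nat.div_pos (Nat.le_of_dvd hk hdk) (Nat.pos_of_dvd_of_pos hdk hk)
    positivity
  calc (∑ d ∈ A, c d * ‖f (k / d)‖) ^ 2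
      ≤ (∑ d ∈ A, (c d / ((k / d : ℕ) : ℝ) ^ α) ^ 2) *
          ∑ d ∈ A, (((k / d : ℕ) : ℝ) ^ α * ‖f (k / d)‖) ^ 2 :=
        sq_sum_mul_le_sum_sq_div_mul_sum_sq_mul A _ _ _ hw
    _ ≤ (K ^ 2 * (k : ℝ) ^ (-(2 * α)) *
          (iteratedDeriv 2 riemannZeta ((2 * (σ - α) - 1 : ℝ) : ℂ)).re) * M ^ 2 :=
        mul_le_mul_of_nonneg (sum_sq_div_rpow_div_le_iteratedDeriv_riemannZeta hk hσ hc0 hc)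
          ((sum_sq_rpow_mul_norm_div_le_tsum (filter_subset _ _) α f hfs).trans hfM)
          (sum_nonneg fun _ _ => sq_nonneg _) (sq_nonneg M)
    _ = _ := by ring

theorem broadband_divisor_sum_estimate (α σ K M : ℝ) (hα : 0 ≤ α) (hσ : α + 1 < σ)
    (c : ℕ → ℝ) (hc0 : ∀ d : ℕ, 2 ≤ d → 0 ≤ c d)
    (hc : ∀ d : ℕ, 2 ≤ d → c d ≤ K * (d : ℝ) ^ ((1:ℝ)/2 - σ) * Real.log d)
    (f : ℕ → ℂ)
    (hfs : Summable fun m : ℕ => ((m + 1 : ℕ) : ℝ) ^ (2 * α) * ‖f (m + 1)‖ ^ 2)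
    (hfM : (∑' m : ℕ, ((m + 1 : ℕ) : ℝ) ^ (2 * α) * ‖f (m + 1)‖ ^ 2) ≤ M ^ 2) :
    ∀ k : ℕ, 1 ≤ k →
      (∑ d ∈ k.divisors.filter (fun d => 1 < d), c d * ‖f (k / d)‖) ^ 2 ≤
        M ^ 2 * K ^ 2 * (k : ℝ) ^ (-(2 * α)) *
          (iteratedDeriv 2 riemannZeta ((2 * (σ - α) - 1 : ℝ) : ℂ)).re :=
  broadband_divisor_sum_estimate_general α σ K M hσ c hc0 hc f hfs hfM
end
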